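/- arXiv:1205.3703 — 2 statements merged into one kernel-verified Lean document; each statement's English description precedes it below -/
import Mathlib

section
/- Suppose for fixed constants λ* > 0, K* ≥ 0, and for every M > 0 and t > 0, P( sup_{‖θ-θ*‖₁≤M} |Y(θ,θ*)| ≥ (λ* M / e)(1 + K*[√(t/log p) + t/n]) ) ≤ 6 e^{-t}. Then for any fixed M̄ > 0 and all t > 0, P( sup_{‖θ-θ*‖₁≤M̄} |Y(θ,θ*)| / (‖θ-θ*‖₁ ∨ e^{-(p-1)}M̄) ≥ λ*(1 + K*[√((t+log p)/log p) + (t+log p)/n]) ) ≤ 6 e^{-t}. -/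
/-!
Every `θ` in the ball `‖θ - θ*‖₁ ≤ M̄` lies in one of the `p` shells: its normaliser
`N = ‖θ - θ*‖₁ ∨ e^{-(p-1)} M̄` satisfies `N ≤ M_j ≤ e N` for some `j < p`. Hence
`|Y θ| / N ≤ e · sup_{‖θ - θ*‖₁ ≤ M_j} |Y| / M_j`, so the normalised event forces one of the
`p` fixed-radius events at level `t + log p`, each of probability at most `6 e^{-t} / p`.
-/

section Peeling

open Real Finset

theorem exp_neg_natCast_mul_le {M : ℝ} (hM : 0 ≤ M) (n : ℕ) : exp (-n) * M ≤ M :=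
  mul_le_of_le_one_left hM (exp_le_one_iff.2 (by simp))

theorem exists_exp_neg_mul_mem_Icc {N M : ℝ} (hN : 0 ≤ N) (hNM : N ≤ M) :
    ∀ k : ℕ, exp (-k) * M ≤ N → ∃ j ≤ k, exp (-j) * M ∈ Set.Icc N (exp 1 * N)
  | 0, h0 => ⟨0, le_rfl, by simpa using hNM, by
      simp only [CharP.cast_eq_zero, neg_zero, exp_zero, one_mul] at h0 ⊢
      nlinarith [add_one_le_exp 1]⟩
  | k + 1, hk => by
    by_cases hk' : exp (-k) * M ≤ N
    · obtain ⟨j, hjk, hj⟩ := exists_exp_neg_mul_mem_Icc hN hNM k hk'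
      exact ⟨j, hjk.trans k.le_succ, hj⟩
    · refine ⟨k, k.le_succ, (not_le.1 hk').le, ?_⟩
      calc exp (-k) * M = exp 1 * (exp (-(k + 1 : ℕ)) * M) := by
            rw [← mul_assoc, ← exp_add]; push_cast; ring_nf
        _ ≤ exp 1 * N := by gcongr

theorem natCast_mul_exp_neg_add_log {p : ℕ} (hp : 0 < p) (t : ℝ) :
    (p : ℝ) * exp (-(t + log p)) = exp (-t) := by
  rw [neg_add, exp_add, exp_neg (log p), exp_log (by exact_mod_cast hp)]
  field_simp

variable {ι : Type*} (f r : ι → ℝ)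

def ballValues (M : ℝ) : Set ℝ := {x | ∃ θ, r θ ≤ M ∧ x = f θ}

variable {f r}

theorem ballValues_mono {M M' : ℝ} (h : M ≤ M') : ballValues f r M ⊆ ballValues f r M' :=
  fun _ ⟨θ, hθ, hx⟩ => ⟨θ, hθ.trans h, hx⟩

theorem bddAbove_ballValues_of_normalized {M w : ℝ} (hw : 0 < w)
    (hwM : w ≤ M) (hS : BddAbove (ballValues (fun θ => f θ / max (r θ) w) r M)) :
    BddAbove (ballValues f r M) := by
  obtain ⟨b, hb⟩ := hS
  refine ⟨max b 0 * M, ?_⟩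
  rintro _ ⟨θ, hθ, rfl⟩
  have hN : 0 < max (r θ) w := lt_max_of_lt_right hw
  have hfb : f θ / max (r θ) w ≤ max b 0 := (hb ⟨θ, hθ, rfl⟩).trans (le_max_left b 0)
  calc f θ ≤ max b 0 * max (r θ) w := (div_le_iff₀ hN).1 hfb
    _ ≤ max b 0 * M := by gcongr; exact max_le hθ hwM

theorem exists_shell_le_sSup (hf : ∀ θ, 0 ≤ f θ) {M c : ℝ} {k : ℕ} (hM : 0 < M) (hc : 0 < c)
    (h : c ≤ sSup (ballValues (fun θ => f θ / max (r θ) (exp (-k) * M)) r M)) :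
    ∃ j ≤ k, c * (exp (-j) * M) ≤ exp 1 * sSup (ballValues f r (exp (-j) * M)) := by
  set w := exp (-k) * M
  have hw : 0 < w := by positivity
  have hwM : w ≤ M := exp_neg_natCast_mul_le hM.le k
  -- `0 < c` excludes the junk value `sSup = 0` of a set that is not bounded above.
  have hbdd : BddAbove (ballValues f r M) := by
    refine bddAbove_ballValues_of_normalized hw hwM ?_
    by_contra hS
    rw [Real.sSup_of_not_bddAbove hS] at h
    linarith
  set g : ℕ → ℝ := fun j => exp 1 * sSup (ballValues f r (exp (-j) * M)) / (exp (-j) * M)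
  have hk : (range (k + 1)).Nonempty := nonempty_range_add_one
  have hg : ∀ x ∈ ballValues (fun θ => f θ / max (r θ) w) r M, x ≤ (range (k + 1)).sup' hk g := by
    rintro _ ⟨θ, hθ, rfl⟩
    set N := max (r θ) w
    have hN : 0 < N := lt_max_of_lt_right hw
    obtain ⟨j, hjk, hNj, hjN⟩ :=
      exists_exp_neg_mul_mem_Icc hN.le (max_le hθ hwM) k (le_max_right _ _)
    have hfT : f θ ≤ sSup (ballValues f r (exp (-j) * M)) :=
      le_csSup (hbdd.mono (ballValues_mono (exp_neg_natCast_mul_le hM.le j)))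
        ⟨θ, (le_max_left _ _).trans hNj, rfl⟩
    calc f θ / N = exp 1 * f θ / (exp 1 * N) := by rw [mul_div_mul_left _ _ (exp_pos 1).ne']
      _ ≤ exp 1 * sSup (ballValues f r (exp (-j) * M)) / (exp (-j) * M) := by
        gcongr; exact mul_nonneg (exp_pos 1).le ((hf θ).trans hfT)
      _ ≤ _ := le_sup' g (mem_range_succ_iff.2 hjk)
  obtain ⟨j, hj, hjg⟩ := exists_mem_eq_sup' hk g
  refine ⟨j, mem_range_succ_iff.1 hj, ?_⟩
  have hg0 : 0 ≤ g 0 := by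
    have := Real.sSup_nonneg (s := ballValues f r (exp (-(0 : ℕ)) * M))
      fun _ ⟨θ, _, hx⟩ => hx ▸ hf θ
    positivity
  have hgj : c ≤ g j :=
    hjg ▸ h.trans (Real.sSup_le hg (hg0.trans (le_sup' g (mem_range.2 k.succ_pos))))
  exact (le_div_iff₀ (by positivity)).1 hgj

end Peeling

open Finset MeasureTheory

theorem peeling_device_general {Ω : Type*} [MeasurableSpace Ω]
    (μ : Measure Ω) [IsProbabilityMeasure μ]
    {p n : ℕ} (hp : 1 ≤ p)
    (Y : (Fin p → ℝ) → Ω → ℝ) (θstar : Fin p → ℝ)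
    {lam K : ℝ} (hlam : 0 < lam) (hK : 0 ≤ K)
    (h : ∀ M : ℝ, 0 < M → ∀ t : ℝ, 0 < t →
      μ {ω | lam * M / Real.exp 1 *
              (1 + K * (Real.sqrt (t / Real.log p) + t / n))
            ≤ sSup {x : ℝ | ∃ θ : Fin p → ℝ,
                (∑ j, |θ j - θstar j|) ≤ M ∧ x = |Y θ ω|}}
        ≤ ENNReal.ofReal (6 * Real.exp (-t))) :
    ∀ Mbar : ℝ, 0 < Mbar → ∀ t : ℝ, 0 < t →
      μ {ω | lam * (1 + K * (Real.sqrt ((t + Real.log p) / Real.log p)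
                + (t + Real.log p) / n))
            ≤ sSup {x : ℝ | ∃ θ : Fin p → ℝ,
                (∑ j, |θ j - θstar j|) ≤ Mbar ∧
                x = |Y θ ω| /
                  max (∑ j, |θ j - θstar j|) (Real.exp (-((p : ℝ) - 1)) * Mbar)}}
        ≤ ENNReal.ofReal (6 * Real.exp (-t)) := by
  intro Mbar hMbar t ht
  have htp : 0 < t + Real.log p := by
    have := Real.log_nonneg (by exact_mod_cast hp : (1 : ℝ) ≤ p)
    linarith
  set A := Real.sqrt ((t + Real.log p) / Real.log p) + (t + Real.log p) / n
  have hc : 0 < lam * (1 + K * A) := by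
    have : 0 ≤ A := add_nonneg (Real.sqrt_nonneg _) (div_nonneg htp.le n.cast_nonneg)
    positivity
  have hk : -((p : ℝ) - 1) = -((p - 1 : ℕ) : ℝ) := by rw [Nat.cast_sub hp, Nat.cast_one]
  calc μ _ ≤ μ (⋃ j ∈ range p, {ω | lam * (Real.exp (-j) * Mbar) / Real.exp 1 * (1 + K * A)
          ≤ sSup (ballValues (fun θ => |Y θ ω|) (fun θ => ∑ j, |θ j - θstar j|)
              (Real.exp (-j) * Mbar))}) := measure_mono ?_
    _ ≤ ∑ j ∈ range p, μ _ := measure_biUnion_finset_le _ _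
    _ ≤ ∑ j ∈ range p, ENNReal.ofReal (6 * Real.exp (-(t + Real.log p))) :=
      sum_le_sum fun j _ => h _ (by positivity) _ htp
    _ = ENNReal.ofReal (6 * Real.exp (-t)) := by
      rw [sum_const, card_range, nsmul_eq_mul, ← ENNReal.ofReal_natCast,
        ← ENNReal.ofReal_mul p.cast_nonneg, mul_left_comm, natCast_mul_exp_neg_add_log hp t]
  intro ω hω
  rw [hk] at hω
  obtain ⟨j, hj, hshell⟩ := exists_shell_le_sSup (fun θ => abs_nonneg (Y θ ω)) hMbar hc hω
  refine Set.mem_biUnion (mem_range.2 (show j < p by omega)) ?_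
  rw [Set.mem_ofPred_eq, div_mul_eq_mul_div, div_le_iff₀ (Real.exp_pos 1)]
  linarith

/-- The peeling device: a fixed-radius tail bound over all `ℓ₁`-balls yields a
tail bound for the process normalized by `‖θ - θ*‖₁ ∨ e^{-(p-1)} M̄`. -/
theorem peeling_device {Ω : Type*} [MeasurableSpace Ω]
    (μ : Measure Ω) [IsProbabilityMeasure μ]
    {p n : ℕ} (hp : 1 ≤ p) (hn : 0 < n)
    (Y : (Fin p → ℝ) → Ω → ℝ) (θstar : Fin p → ℝ)
    {lam K : ℝ} (hlam : 0 < lam) (hK : 0 ≤ K)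
    (h : ∀ M : ℝ, 0 < M → ∀ t : ℝ, 0 < t →
      μ {ω | lam * M / Real.exp 1 *
              (1 + K * (Real.sqrt (t / Real.log p) + t / n))
            ≤ sSup {x : ℝ | ∃ θ : Fin p → ℝ,
                (∑ j, |θ j - θstar j|) ≤ M ∧ x = |Y θ ω|}}
        ≤ ENNReal.ofReal (6 * Real.exp (-t))) :
    ∀ Mbar : ℝ, 0 < Mbar → ∀ t : ℝ, 0 < t →
      μ {ω | lam * (1 + K * (Real.sqrt ((t + Real.log p) / Real.log p)
                + (t + Real.log p) / n))
            ≤ sSup {x : ℝ | ∃ θ : Fin p → ℝ,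
                (∑ j, |θ j - θstar j|) ≤ Mbar ∧
                x = |Y θ ω| /
                  max (∑ j, |θ j - θstar j|) (Real.exp (-((p : ℝ) - 1)) * Mbar)}}
        ≤ ENNReal.ofReal (6 * Real.exp (-t)) :=
  peeling_device_general μ hp Y θstar hlam hK h
end

section
/- Under the assumptions of the previous basic-inequality lemma, and additionally assuming the margin condition E(θ;θ₀) ≥ G(τ(θ - θ⁰)) and the compatibility bound ‖θ̂_{S₀} - θ⁰‖₁ ≤ Γ(L,S₀)·τ(θ̂ - θ⁰) with L = (λ+λ₀)/(λ-λ₀), one has for every 0 < δ < 1: (1-δ) E(θ̂;θ₀) + (λ-λ₀)‖θ̂ - θ⁰‖₁ ≤ δ H(2λΓ(L,S₀)/δ), where H is the convex conjugate of G. -/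
/-!
Since `θ⁰` vanishes off `S₀`, the triangle inequality turns the basic inequality into
`E + (λ-λ₀)‖θ̂-θ⁰‖₁ ≤ 2λ‖θ̂_{S₀}-θ⁰‖₁`. Compatibility bounds the right side by `2λΓ τ(θ̂-θ⁰)`,
and Fenchel–Young applied to `(2λΓ/δ)·τ(θ̂-θ⁰)` together with the margin condition bounds that
by `δE + δH(2λΓ/δ)`.
-/

open Finset

section Lasso

variable {ι : Type*} [Fintype ι] [DecidableEq ι]

theorem sum_compl_abs_sub_add_sum_abs_le (x y : ι → ℝ) (S : Finset ι)
    (hy : ∀ j ∉ S, y j = 0) :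
    ∑ j ∈ Sᶜ, |x j - y j| + ∑ j, |y j| ≤ ∑ j, |x j| + ∑ j ∈ S, |x j - y j| := by
  have hy_sum : ∑ j ∈ S, |y j| = ∑ j, |y j| :=
    sum_subset (subset_univ S) fun j _ hj => by rw [hy j hj, abs_zero]
  have hx_sum : ∑ j, |x j| = ∑ j ∈ S, |x j| + ∑ j ∈ Sᶜ, |x j - y j| := by
    rw [← sum_add_sum_compl S]
    exact congrArg _ (sum_congr rfl fun j hj => by rw [hy j (mem_compl.mp hj), sub_zero])
  have hS : ∑ j ∈ S, |y j| ≤ ∑ j ∈ S, |x j| + ∑ j ∈ S, |x j - y j| := by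
    rw [← sum_add_distrib]
    exact sum_le_sum fun j _ => by
      linarith [abs_sub_abs_le_abs_sub (y j) (x j), abs_sub_comm (y j) (x j)]
  linarith

theorem add_mul_sum_abs_sub_le_of_basic_inequality (x y : ι → ℝ) (S : Finset ι)
    (hy : ∀ j ∉ S, y j = 0) {E Y lam lam0 : ℝ} (hlam : 0 ≤ lam)
    (hbasic : E + lam * ∑ j, |x j| ≤ Y + lam * ∑ j, |y j|)
    (hY : |Y| ≤ lam0 * ∑ j, |x j - y j|) :
    E + (lam - lam0) * ∑ j, |x j - y j| ≤ 2 * lam * ∑ j ∈ S, |x j - y j| := by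
  have hdecomp := mul_le_mul_of_nonneg_left (sum_compl_abs_sub_add_sum_abs_le x y S hy) hlam
  have hsplit := sum_add_sum_compl S fun j => |x j - y j|
  linear_combination hbasic + (le_abs_self Y).trans hY + hdecomp - lam * hsplit

end Lasso

theorem mul_le_add_of_fenchel_young {G H : ℝ → ℝ}
    (hFY : ∀ u v : ℝ, 0 ≤ u → 0 ≤ v → u * v ≤ G u + H v)
    {c t δ : ℝ} (hc : 0 ≤ c) (ht : 0 ≤ t) (hδ : 0 < δ) :
    c * t ≤ δ * G t + δ * H (c / δ) := by
  have h := mul_le_mul_of_nonneg_left (hFY t (c / δ) ht (div_nonneg hc hδ.le)) hδ.le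
  rwa [mul_add, ← mul_assoc, mul_comm δ t, mul_assoc, mul_div_cancel₀ c hδ.ne', mul_comm] at h

theorem oracle_inequality_theta0_general {p : ℕ}
    (θhat θ0 : Fin p → ℝ) (S0 : Finset (Fin p))
    (hsupp : ∀ j ∉ S0, θ0 j = 0)
    (E Y lam lam0 : ℝ) (hlam0 : 0 < lam0) (hlam : lam0 < lam)
    (hbasic : E + lam * ∑ j, |θhat j| ≤ Y + lam * ∑ j, |θ0 j|)
    (hY : |Y| ≤ lam0 * ∑ j, |θhat j - θ0 j|)
    (G H : ℝ → ℝ) (τ : (Fin p → ℝ) → ℝ) (hτ : 0 ≤ τ (θhat - θ0))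
    -- Fenchel–Young: `H` is the convex conjugate of `G`
    (hFY : ∀ u v : ℝ, 0 ≤ u → 0 ≤ v → u * v ≤ G u + H v)
    -- margin condition at `θ̂`
    (hmargin : G (τ (θhat - θ0)) ≤ E)
    (Γ : ℝ) (hΓ : 0 < Γ)
    -- compatibility bound with `L = (λ+λ₀)/(λ-λ₀)`
    (hcompat : (∑ j ∈ S0, |θhat j - θ0 j|) ≤ Γ * τ (θhat - θ0))
    (δ : ℝ) (hδ0 : 0 < δ) :
    (1 - δ) * E + (lam - lam0) * ∑ j, |θhat j - θ0 j|
      ≤ δ * H (2 * lam * Γ / δ) := by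
  have hlam_pos : 0 < lam := hlam0.trans hlam
  have hcone := add_mul_sum_abs_sub_le_of_basic_inequality θhat θ0 S0 hsupp hlam_pos.le hbasic hY
  have hcompat' : 2 * lam * ∑ j ∈ S0, |θhat j - θ0 j| ≤ 2 * lam * Γ * τ (θhat - θ0) := by
    rw [mul_assoc (2 * lam)]
    exact mul_le_mul_of_nonneg_left hcompat (by positivity)
  have hyoung := mul_le_add_of_fenchel_young hFY (by positivity : 0 ≤ 2 * lam * Γ) hτ hδ0
  have hmargin' := mul_le_mul_of_nonneg_left hmargin hδ0.le
  linarith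

/-- Oracle inequality at `θ⁰`: combining the Basic Inequality, the margin
condition and the compatibility (effective sparsity) bound yields
`(1-δ) E(θ̂;θ₀) + (λ-λ₀)‖θ̂-θ⁰‖₁ ≤ δ H(2λΓ(L,S₀)/δ)`. -/
theorem oracle_inequality_theta0 {p : ℕ}
    (θhat θ0 : Fin p → ℝ) (S0 : Finset (Fin p))
    (hsupp : ∀ j ∉ S0, θ0 j = 0)
    (E Y lam lam0 : ℝ) (hE : 0 ≤ E) (hlam0 : 0 < lam0) (hlam : lam0 < lam)
    (hbasic : E + lam * ∑ j, |θhat j| ≤ Y + lam * ∑ j, |θ0 j|)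
    (hY : |Y| ≤ lam0 * ∑ j, |θhat j - θ0 j|)
    (G H : ℝ → ℝ) (τ : (Fin p → ℝ) → ℝ) (hτ : 0 ≤ τ (θhat - θ0))
    -- Fenchel–Young: `H` is the convex conjugate of `G`
    (hFY : ∀ u v : ℝ, 0 ≤ u → 0 ≤ v → u * v ≤ G u + H v)
    -- margin condition at `θ̂`
    (hmargin : G (τ (θhat - θ0)) ≤ E)
    (Γ : ℝ) (hΓ : 0 < Γ)
    -- compatibility bound with `L = (λ+λ₀)/(λ-λ₀)`
    (hcompat : (∑ j ∈ S0, |θhat j - θ0 j|) ≤ Γ * τ (θhat - θ0))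
    (δ : ℝ) (hδ0 : 0 < δ) (hδ1 : δ < 1) :
    (1 - δ) * E + (lam - lam0) * ∑ j, |θhat j - θ0 j|
      ≤ δ * H (2 * lam * Γ / δ) :=
  oracle_inequality_theta0_general θhat θ0 S0 hsupp E Y lam lam0 hlam0 hlam hbasic hY G H τ hτ hFY
    hmargin Γ hΓ hcompat δ hδ0
end
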